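/- Define for λ=(λ₁,λ₂)∈ℚ² with p=2 the series G_λ(q) = Σ_{n₁,n₂≥1} min(n₁,n₂) q^{2Q(n₁+λ₁-1/2, n₂+λ₂-1/2)} · (1 - q^{2(n₁+λ₁)-(n₂+λ₂)} - q^{2(n₂+λ₂)-(n₁+λ₁)} + q^{3(n₁+λ₁)} + q^{3(n₂+λ₂)} - q^{2(n₁+λ₁)+2(n₂+λ₂)}), with Q(x,y)=x²+y²-xy. Then G_λ(q) = Σ_{n₁,n₂≥0} q^{2Q(n₁+λ₁+1/2, n₂+λ₂+1/2)} - Σ_{n₂>n₁≥0} q^{2Q(n₁+λ₁+1/2, n₂+λ₂)} - Σ_{n₁>n₂≥0} q^{2Q(n₁+λ₁, n₂+λ₂+1/2)}. -/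

import Mathlib

open Complex

/-- Q(x,y) = x² + y² - xy. -/
def Qform (x y : ℚ) : ℚ := x ^ 2 + y ^ 2 - x * y

/-- q^r for rational r, where q = e^{2πiτ}: e τ r := exp(2πiτr). -/
noncomputable def qpow (τ : ℂ) (r : ℚ) : ℂ := Complex.exp (2 * Real.pi * I * τ * r)

/-- The series G_lam for p=2 (lam∈ℚ²):
G_lam = Σ_{n₁,n₂≥1} min(n₁,n₂) q^{2Q(n₁+l₁-1/2,n₂+l₂-1/2)}
 ·(1 - q^{2(n₁+l₁)-(n₂+l₂)} - q^{2(n₂+l₂)-(n₁+l₁)} + q^{3(n₁+l₁)} + q^{3(n₂+l₂)}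
    - q^{2(n₁+l₁)+2(n₂+l₂)}). -/
noncomputable def Gser (τ : ℂ) (l₁ l₂ : ℚ) : ℂ :=
  ∑' n : ℕ × ℕ,
    ((min (n.1 + 1) (n.2 + 1) : ℕ) : ℂ) *
      qpow τ (2 * Qform ((n.1 + 1 : ℕ) + l₁ - 1/2) ((n.2 + 1 : ℕ) + l₂ - 1/2)) *
      (1 - qpow τ (2 * ((n.1 + 1 : ℕ) + l₁) - ((n.2 + 1 : ℕ) + l₂))
         - qpow τ (2 * ((n.2 + 1 : ℕ) + l₂) - ((n.1 + 1 : ℕ) + l₁))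
         + qpow τ (3 * ((n.1 + 1 : ℕ) + l₁))
         + qpow τ (3 * ((n.2 + 1 : ℕ) + l₂))
         - qpow τ (2 * ((n.1 + 1 : ℕ) + l₁) + 2 * ((n.2 + 1 : ℕ) + l₂)))

/- ### Auxiliary lemmas -/

lemma qpow_add (τ : ℂ) (r s : ℚ) : qpow τ (r + s) = qpow τ r * qpow τ s := by
  rw [qpow, qpow, qpow, ← Complex.exp_add]
  congr 1
  push_cast
  ring

lemma qpow_norm (τ : ℂ) (r : ℚ) : ‖qpow τ r‖ = Real.exp (-(2 * Real.pi * τ.im) * r) := by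
  rw [qpow, Complex.norm_exp]
  congr 1
  have : (2 * (Real.pi:ℂ) * I * τ * (r:ℚ)) = ((2 * Real.pi * (r:ℚ) : ℝ) : ℂ) * (I * τ) := by
    push_cast; ring
  rw [this]
  simp [Complex.mul_re]
  ring

lemma qform_lb (a b : ℚ) (n m : ℕ) :
    (n:ℚ) + m + (a + b - 1/2) ≤ 2 * Qform ((n:ℚ) + a) ((m:ℚ) + b) := by
  have h1 : (0:ℚ) ≤ ((n:ℚ) + a - (m + b))^2 := sq_nonneg _
  have h2 : (0:ℚ) ≤ ((n:ℚ) + a - 1/2)^2 := sq_nonneg _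
  have h3 : (0:ℚ) ≤ ((m:ℚ) + b - 1/2)^2 := sq_nonneg _
  unfold Qform
  nlinarith

lemma summable_master (τ : ℂ) (hτ : 0 < τ.im) (a b : ℚ) (c : ℕ × ℕ → ℂ)
    (hc : ∀ n : ℕ × ℕ, ‖c n‖ ≤ n.1 + n.2 + 2) :
    Summable (fun n : ℕ × ℕ => c n * qpow τ (2 * Qform ((n.1:ℚ) + a) ((n.2:ℚ) + b))) := by
  set T : ℝ := 2 * Real.pi * τ.im with hT
  have hT0 : 0 < T := by positivity
  set ρ : ℝ := Real.exp (-T) with hρ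
  have hρ0 : 0 < ρ := Real.exp_pos _
  have hρ1 : ρ < 1 := Real.exp_lt_one_iff.mpr (by linarith)
  set C : ℝ := Real.exp (T * (1/2 - a - b)) with hC
  have hone : Summable (fun n : ℕ => ((n:ℝ) + 2) * ρ ^ n) := by
    have h1 : Summable (fun n : ℕ => (n:ℝ) * ρ ^ n) := by
      simpa using summable_pow_mul_geometric_of_norm_lt_one 1 (r := ρ)
        (by rwa [Real.norm_eq_abs, abs_of_pos hρ0])
    have h2 : Summable (fun n : ℕ => (2:ℝ) * ρ ^ n) :=
      (summable_geometric_of_lt_one hρ0.le hρ1).mul_left 2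
    simpa [add_mul] using h1.add h2
  have hcomp : Summable (fun n : ℕ × ℕ =>
      (((n.1:ℝ) + 2) * ρ ^ n.1) * (C * (((n.2:ℝ) + 2) * ρ ^ n.2))) := by
    apply Summable.mul_of_nonneg hone (hone.mul_left C)
    · intro n; positivity
    · intro n; positivity
  apply Summable.of_norm
  apply Summable.of_nonneg_of_le (fun n => norm_nonneg _) _ hcomp
  intro n
  rw [norm_mul, qpow_norm]
  set R : ℝ := ((2 * Qform ((n.1:ℚ) + a) ((n.2:ℚ) + b) : ℚ) : ℝ) with hR
  have hq : ((n.1:ℝ) + n.2 + ((a:ℝ) + (b:ℝ) - 1/2) : ℝ) ≤ R := by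
    rw [hR]
    have h := (Rat.cast_le (K := ℝ)).mpr (qform_lb a b n.1 n.2)
    push_cast at h ⊢
    linarith
  have hexp : Real.exp (-T * R) ≤ C * (ρ ^ n.1 * ρ ^ n.2) := by
    calc Real.exp (-T * R)
        ≤ Real.exp (-T * ((n.1:ℝ) + n.2 + ((a:ℝ) + (b:ℝ) - 1/2))) := by
          apply Real.exp_le_exp.mpr
          nlinarith [mul_le_mul_of_nonneg_left hq hT0.le]
      _ = C * (ρ ^ n.1 * ρ ^ n.2) := by
          rw [hC, hρ, ← Real.exp_nat_mul, ← Real.exp_nat_mul,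
            ← Real.exp_add, ← Real.exp_add]
          ring_nf
  calc ‖c n‖ * Real.exp (-T * R)
      ≤ ((n.1:ℝ) + n.2 + 2) * (C * (ρ ^ n.1 * ρ ^ n.2)) := by
        apply mul_le_mul (hc n) hexp (Real.exp_nonneg _)
        positivity
    _ ≤ (((n.1:ℝ) + 2) * ρ ^ n.1) * (C * (((n.2:ℝ) + 2) * ρ ^ n.2)) := by
        have h1 : ((n.1:ℝ) + n.2 + 2) ≤ ((n.1:ℝ) + 2) * ((n.2:ℝ) + 2) := by
          nlinarith [Nat.cast_nonneg (α := ℝ) n.1, Nat.cast_nonneg (α := ℝ) n.2]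
        have h2 : (0:ℝ) ≤ C * (ρ ^ n.1 * ρ ^ n.2) := by positivity
        nlinarith [mul_le_mul_of_nonneg_right h1 h2]

/-- Reindexing lemma. -/
lemma reindexC (e : ℕ × ℕ → ℕ × ℕ) (he : Function.Injective e) (f : ℕ × ℕ → ℂ)
    (h0 : ∀ m, m ∉ Set.range e → f m = 0) : ∑' n, f (e n) = ∑' m, f m := by
  apply he.tsum_eq
  intro m hm
  by_contra hmem
  exact hm (h0 m hmem)

/-- The basic shifted theta-type term. -/
noncomputable def Sfun (τ : ℂ) (l₁ l₂ a b : ℚ) (n : ℕ × ℕ) : ℂ :=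
  qpow τ (2 * Qform ((n.1:ℚ) + l₁ + a) ((n.2:ℚ) + l₂ + b))

/-- Coefficient family min(n₁+j, n₂+k). -/
def Cmin (j k : ℕ) (n : ℕ × ℕ) : ℂ := ((min (n.1 + j) (n.2 + k) : ℕ) : ℂ)

lemma Cmin_norm (j k : ℕ) (hj : j ≤ 1) (hk : k ≤ 1) (n : ℕ × ℕ) :
    ‖Cmin j k n‖ ≤ (n.1:ℝ) + n.2 + 2 := by
  unfold Cmin
  rw [Complex.norm_natCast]
  have h : (min (n.1 + j) (n.2 + k) : ℕ) ≤ n.1 + n.2 + 2 := by omega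
  calc ((min (n.1 + j) (n.2 + k) : ℕ) : ℝ) ≤ ((n.1 + n.2 + 2 : ℕ) : ℝ) := by exact_mod_cast h
    _ = (n.1:ℝ) + n.2 + 2 := by push_cast; ring

lemma summable_S (τ : ℂ) (hτ : 0 < τ.im) (l₁ l₂ a b : ℚ) (c : ℕ × ℕ → ℂ)
    (hc : ∀ n : ℕ × ℕ, ‖c n‖ ≤ n.1 + n.2 + 2) :
    Summable (fun n : ℕ × ℕ => c n * Sfun τ l₁ l₂ a b n) := by
  refine (summable_master τ hτ (l₁ + a) (l₂ + b) c hc).congr fun n => ?_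
  unfold Sfun
  rw [show (2 * Qform ((n.1:ℚ) + (l₁ + a)) ((n.2:ℚ) + (l₂ + b)) : ℚ)
      = 2 * Qform ((n.1:ℚ) + l₁ + a) ((n.2:ℚ) + l₂ + b) from by unfold Qform; ring]

lemma summable_CS (τ : ℂ) (hτ : 0 < τ.im) (l₁ l₂ a b : ℚ) (j k : ℕ) (hj : j ≤ 1) (hk : k ≤ 1) :
    Summable (fun n : ℕ × ℕ => Cmin j k n * Sfun τ l₁ l₂ a b n) :=
  summable_S τ hτ l₁ l₂ a b _ (Cmin_norm j k hj hk)

lemma summable_Sone (τ : ℂ) (hτ : 0 < τ.im) (l₁ l₂ a b : ℚ) :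
    Summable (fun n : ℕ × ℕ => Sfun τ l₁ l₂ a b n) := by
  have h := summable_S τ hτ l₁ l₂ a b (fun _ => 1) (by
    intro n
    rw [norm_one]
    have : (0:ℝ) ≤ (n.1:ℝ) + n.2 := by positivity
    linarith)
  simpa using h

/-- Group A: telescoping in the diagonal direction. -/
lemma groupA (τ : ℂ) (hτ : 0 < τ.im) (l₁ l₂ : ℚ) :
    ∑' n : ℕ × ℕ, (Cmin 1 1 n * Sfun τ l₁ l₂ (1/2) (1/2) n
        - Cmin 1 1 n * Sfun τ l₁ l₂ (3/2) (3/2) n)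
      = ∑' n : ℕ × ℕ, Sfun τ l₁ l₂ (1/2) (1/2) n := by
  rw [Summable.tsum_sub (summable_CS τ hτ l₁ l₂ _ _ 1 1 le_rfl le_rfl)
      (summable_CS τ hτ l₁ l₂ _ _ 1 1 le_rfl le_rfl)]
  have h1 : ∑' n : ℕ × ℕ, Cmin 1 1 n * Sfun τ l₁ l₂ (3/2) (3/2) n
      = ∑' m : ℕ × ℕ, Cmin 0 0 m * Sfun τ l₁ l₂ (1/2) (1/2) m := by
    rw [← reindexC (fun n => (n.1 + 1, n.2 + 1))
      (by intro a b h; simp only [Prod.ext_iff] at h ⊢; omega)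
      (fun m => Cmin 0 0 m * Sfun τ l₁ l₂ (1/2) (1/2) m)
      (by
        intro m hm
        show Cmin 0 0 m * Sfun τ l₁ l₂ (1/2) (1/2) m = 0
        have hm' : m.1 = 0 ∨ m.2 = 0 := by
          by_contra hc
          push_neg at hc
          obtain ⟨i, hi⟩ := Nat.exists_eq_succ_of_ne_zero hc.1
          obtain ⟨j, hj⟩ := Nat.exists_eq_succ_of_ne_zero hc.2
          exact hm ⟨(i, j), by simp [hi, hj, Prod.ext_iff]⟩
        have h0 : Cmin 0 0 m = 0 := by
          unfold Cmin
          rcases hm' with h | h <;> simp [h]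
        rw [h0, zero_mul])]
    apply tsum_congr
    intro n
    show Cmin 1 1 n * Sfun τ l₁ l₂ (3/2) (3/2) n
      = Cmin 0 0 (n.1 + 1, n.2 + 1) * Sfun τ l₁ l₂ (1/2) (1/2) (n.1 + 1, n.2 + 1)
    unfold Cmin Sfun
    rw [show (2 * Qform (((n.1 + 1, n.2 + 1) : ℕ × ℕ).1 + l₁ + 1/2)
        (((n.1 + 1, n.2 + 1) : ℕ × ℕ).2 + l₂ + 1/2) : ℚ)
        = 2 * Qform ((n.1:ℚ) + l₁ + 3/2) ((n.2:ℚ) + l₂ + 3/2) from by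
      push_cast; unfold Qform; ring]
  rw [h1, ← Summable.tsum_sub (summable_CS τ hτ l₁ l₂ _ _ 1 1 le_rfl le_rfl)
      (summable_CS τ hτ l₁ l₂ _ _ 0 0 (by omega) (by omega))]
  apply tsum_congr
  intro n
  have hco : Cmin 1 1 n - Cmin 0 0 n = 1 := by
    unfold Cmin
    have : min (n.1 + 1) (n.2 + 1) = min (n.1 + 0) (n.2 + 0) + 1 := by omega
    rw [this]
    push_cast
    ring
  calc Cmin 1 1 n * Sfun τ l₁ l₂ (1/2) (1/2) n - Cmin 0 0 n * Sfun τ l₁ l₂ (1/2) (1/2) n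
      = (Cmin 1 1 n - Cmin 0 0 n) * Sfun τ l₁ l₂ (1/2) (1/2) n := by ring
    _ = Sfun τ l₁ l₂ (1/2) (1/2) n := by rw [hco, one_mul]

/-- Group B: telescoping in the second coordinate. -/
lemma groupB (τ : ℂ) (hτ : 0 < τ.im) (l₁ l₂ : ℚ) :
    ∑' n : ℕ × ℕ, (Cmin 1 1 n * Sfun τ l₁ l₂ 1 (3/2) n
        - Cmin 1 1 n * Sfun τ l₁ l₂ 1 (1/2) n)
      = -∑' k : ℕ × ℕ, (if k.2 < k.1 then Sfun τ l₁ l₂ 0 (1/2) k else 0) := by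
  rw [Summable.tsum_sub (summable_CS τ hτ l₁ l₂ _ _ 1 1 le_rfl le_rfl)
      (summable_CS τ hτ l₁ l₂ _ _ 1 1 le_rfl le_rfl)]
  have h1 : ∑' n : ℕ × ℕ, Cmin 1 1 n * Sfun τ l₁ l₂ 1 (3/2) n
      = ∑' m : ℕ × ℕ, Cmin 1 0 m * Sfun τ l₁ l₂ 1 (1/2) m := by
    rw [← reindexC (fun n => (n.1, n.2 + 1))
      (by intro a b h; simp only [Prod.ext_iff] at h ⊢; omega)
      (fun m => Cmin 1 0 m * Sfun τ l₁ l₂ 1 (1/2) m)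
      (by
        intro m hm
        show Cmin 1 0 m * Sfun τ l₁ l₂ 1 (1/2) m = 0
        have hm' : m.2 = 0 := by
          by_contra hc
          obtain ⟨j, hj⟩ := Nat.exists_eq_succ_of_ne_zero hc
          exact hm ⟨(m.1, j), by simp [hj, Prod.ext_iff]⟩
        have h0 : Cmin 1 0 m = 0 := by unfold Cmin; simp [hm']
        rw [h0, zero_mul])]
    apply tsum_congr
    intro n
    show Cmin 1 1 n * Sfun τ l₁ l₂ 1 (3/2) n
      = Cmin 1 0 (n.1, n.2 + 1) * Sfun τ l₁ l₂ 1 (1/2) (n.1, n.2 + 1)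
    unfold Cmin Sfun
    rw [show (2 * Qform (((n.1, n.2 + 1) : ℕ × ℕ).1 + l₁ + 1)
        (((n.1, n.2 + 1) : ℕ × ℕ).2 + l₂ + 1/2) : ℚ)
        = 2 * Qform ((n.1:ℚ) + l₁ + 1) ((n.2:ℚ) + l₂ + 3/2) from by
      push_cast; unfold Qform; ring]
  rw [h1, ← Summable.tsum_sub (summable_CS τ hτ l₁ l₂ _ _ 1 0 le_rfl (by omega))
      (summable_CS τ hτ l₁ l₂ _ _ 1 1 le_rfl le_rfl)]
  have h2 : ∑' m : ℕ × ℕ, (Cmin 1 0 m * Sfun τ l₁ l₂ 1 (1/2) m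
      - Cmin 1 1 m * Sfun τ l₁ l₂ 1 (1/2) m)
      = ∑' m : ℕ × ℕ, -(if m.2 ≤ m.1 then Sfun τ l₁ l₂ 1 (1/2) m else 0) := by
    apply tsum_congr
    intro m
    by_cases h : m.2 ≤ m.1
    · have hc1 : Cmin 1 0 m = (m.2 : ℂ) := by
        unfold Cmin
        rw [show min (m.1 + 1) (m.2 + 0) = m.2 from by omega]
      have hc2 : Cmin 1 1 m = (m.2 : ℂ) + 1 := by
        unfold Cmin
        rw [show min (m.1 + 1) (m.2 + 1) = m.2 + 1 from by omega]
        push_cast; ring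
      rw [hc1, hc2, if_pos h]
      ring
    · have hc1 : Cmin 1 0 m = ((m.1 : ℂ) + 1) := by
        unfold Cmin
        rw [show min (m.1 + 1) (m.2 + 0) = m.1 + 1 from by omega]
        push_cast; ring
      have hc2 : Cmin 1 1 m = (m.1 : ℂ) + 1 := by
        unfold Cmin
        rw [show min (m.1 + 1) (m.2 + 1) = m.1 + 1 from by omega]
        push_cast; ring
      rw [hc1, hc2, if_neg h]
      ring
  rw [h2, tsum_neg, neg_inj]
  rw [← reindexC (fun m => (m.1 + 1, m.2))
      (by intro a b h; simp only [Prod.ext_iff] at h ⊢; omega)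
      (fun k => if k.2 < k.1 then Sfun τ l₁ l₂ 0 (1/2) k else 0)
      (by
        intro k hk
        show (if k.2 < k.1 then Sfun τ l₁ l₂ 0 (1/2) k else 0) = 0
        have hk' : k.1 = 0 := by
          by_contra hc
          obtain ⟨i, hi⟩ := Nat.exists_eq_succ_of_ne_zero hc
          exact hk ⟨(i, k.2), by simp [hi, Prod.ext_iff]⟩
        rw [if_neg (by omega)])]
  apply tsum_congr
  intro m
  show (if m.2 ≤ m.1 then Sfun τ l₁ l₂ 1 (1/2) m else 0)
    = if ((m.1 + 1, m.2) : ℕ × ℕ).2 < ((m.1 + 1, m.2) : ℕ × ℕ).1 then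
        Sfun τ l₁ l₂ 0 (1/2) (m.1 + 1, m.2) else 0
  have hlt : (((m.1 + 1, m.2) : ℕ × ℕ).2 < ((m.1 + 1, m.2) : ℕ × ℕ).1) ↔ m.2 ≤ m.1 := by
    dsimp only
    omega
  by_cases h : m.2 ≤ m.1
  · rw [if_pos h, if_pos (hlt.mpr h)]
    unfold Sfun
    rw [show (2 * Qform (((m.1 + 1, m.2) : ℕ × ℕ).1 + l₁ + 0)
        (((m.1 + 1, m.2) : ℕ × ℕ).2 + l₂ + 1/2) : ℚ)
        = 2 * Qform ((m.1:ℚ) + l₁ + 1) ((m.2:ℚ) + l₂ + 1/2) from by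
      push_cast; unfold Qform; ring]
  · rw [if_neg h, if_neg (fun hc => h (hlt.mp hc))]

/-- Group C: telescoping in the first coordinate. -/
lemma groupC (τ : ℂ) (hτ : 0 < τ.im) (l₁ l₂ : ℚ) :
    ∑' n : ℕ × ℕ, (Cmin 1 1 n * Sfun τ l₁ l₂ (3/2) 1 n
        - Cmin 1 1 n * Sfun τ l₁ l₂ (1/2) 1 n)
      = -∑' k : ℕ × ℕ, (if k.1 < k.2 then Sfun τ l₁ l₂ (1/2) 0 k else 0) := by
  rw [Summable.tsum_sub (summable_CS τ hτ l₁ l₂ _ _ 1 1 le_rfl le_rfl)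
      (summable_CS τ hτ l₁ l₂ _ _ 1 1 le_rfl le_rfl)]
  have h1 : ∑' n : ℕ × ℕ, Cmin 1 1 n * Sfun τ l₁ l₂ (3/2) 1 n
      = ∑' m : ℕ × ℕ, Cmin 0 1 m * Sfun τ l₁ l₂ (1/2) 1 m := by
    rw [← reindexC (fun n => (n.1 + 1, n.2))
      (by intro a b h; simp only [Prod.ext_iff] at h ⊢; omega)
      (fun m => Cmin 0 1 m * Sfun τ l₁ l₂ (1/2) 1 m)
      (by
        intro m hm
        show Cmin 0 1 m * Sfun τ l₁ l₂ (1/2) 1 m = 0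
        have hm' : m.1 = 0 := by
          by_contra hc
          obtain ⟨i, hi⟩ := Nat.exists_eq_succ_of_ne_zero hc
          exact hm ⟨(i, m.2), by simp [hi, Prod.ext_iff]⟩
        have h0 : Cmin 0 1 m = 0 := by unfold Cmin; simp [hm']
        rw [h0, zero_mul])]
    apply tsum_congr
    intro n
    show Cmin 1 1 n * Sfun τ l₁ l₂ (3/2) 1 n
      = Cmin 0 1 (n.1 + 1, n.2) * Sfun τ l₁ l₂ (1/2) 1 (n.1 + 1, n.2)
    unfold Cmin Sfun
    rw [show (2 * Qform (((n.1 + 1, n.2) : ℕ × ℕ).1 + l₁ + 1/2)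
        (((n.1 + 1, n.2) : ℕ × ℕ).2 + l₂ + 1) : ℚ)
        = 2 * Qform ((n.1:ℚ) + l₁ + 3/2) ((n.2:ℚ) + l₂ + 1) from by
      push_cast; unfold Qform; ring]
  rw [h1, ← Summable.tsum_sub (summable_CS τ hτ l₁ l₂ _ _ 0 1 (by omega) le_rfl)
      (summable_CS τ hτ l₁ l₂ _ _ 1 1 le_rfl le_rfl)]
  have h2 : ∑' m : ℕ × ℕ, (Cmin 0 1 m * Sfun τ l₁ l₂ (1/2) 1 m
      - Cmin 1 1 m * Sfun τ l₁ l₂ (1/2) 1 m)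
      = ∑' m : ℕ × ℕ, -(if m.1 ≤ m.2 then Sfun τ l₁ l₂ (1/2) 1 m else 0) := by
    apply tsum_congr
    intro m
    by_cases h : m.1 ≤ m.2
    · have hc1 : Cmin 0 1 m = (m.1 : ℂ) := by
        unfold Cmin
        rw [show min (m.1 + 0) (m.2 + 1) = m.1 from by omega]
      have hc2 : Cmin 1 1 m = (m.1 : ℂ) + 1 := by
        unfold Cmin
        rw [show min (m.1 + 1) (m.2 + 1) = m.1 + 1 from by omega]
        push_cast; ring
      rw [hc1, hc2, if_pos h]
      ring
    · have hc1 : Cmin 0 1 m = ((m.2 : ℂ) + 1) := by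
        unfold Cmin
        rw [show min (m.1 + 0) (m.2 + 1) = m.2 + 1 from by omega]
        push_cast; ring
      have hc2 : Cmin 1 1 m = (m.2 : ℂ) + 1 := by
        unfold Cmin
        rw [show min (m.1 + 1) (m.2 + 1) = m.2 + 1 from by omega]
        push_cast; ring
      rw [hc1, hc2, if_neg h]
      ring
  rw [h2, tsum_neg, neg_inj]
  rw [← reindexC (fun m => (m.1, m.2 + 1))
      (by intro a b h; simp only [Prod.ext_iff] at h ⊢; omega)
      (fun k => if k.1 < k.2 then Sfun τ l₁ l₂ (1/2) 0 k else 0)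
      (by
        intro k hk
        show (if k.1 < k.2 then Sfun τ l₁ l₂ (1/2) 0 k else 0) = 0
        have hk' : k.2 = 0 := by
          by_contra hc
          obtain ⟨j, hj⟩ := Nat.exists_eq_succ_of_ne_zero hc
          exact hk ⟨(k.1, j), by simp [hj, Prod.ext_iff]⟩
        rw [if_neg (by omega)])]
  apply tsum_congr
  intro m
  show (if m.1 ≤ m.2 then Sfun τ l₁ l₂ (1/2) 1 m else 0)
    = if ((m.1, m.2 + 1) : ℕ × ℕ).1 < ((m.1, m.2 + 1) : ℕ × ℕ).2 then
        Sfun τ l₁ l₂ (1/2) 0 (m.1, m.2 + 1) else 0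
  have hlt : (((m.1, m.2 + 1) : ℕ × ℕ).1 < ((m.1, m.2 + 1) : ℕ × ℕ).2) ↔ m.1 ≤ m.2 := by
    dsimp only
    omega
  by_cases h : m.1 ≤ m.2
  · rw [if_pos h, if_pos (hlt.mpr h)]
    unfold Sfun
    rw [show (2 * Qform (((m.1, m.2 + 1) : ℕ × ℕ).1 + l₁ + 1/2)
        (((m.1, m.2 + 1) : ℕ × ℕ).2 + l₂ + 0) : ℚ)
        = 2 * Qform ((m.1:ℚ) + l₁ + 1/2) ((m.2:ℚ) + l₂ + 1) from by
      push_cast; unfold Qform; ring]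
  · rw [if_neg h, if_neg (fun hc => h (hlt.mp hc))]

/-- Expansion of the Gser summand into six shifted theta terms. -/
lemma gser_expand (τ : ℂ) (l₁ l₂ : ℚ) :
    Gser τ l₁ l₂ =
      ∑' n : ℕ × ℕ,
        ((Cmin 1 1 n * Sfun τ l₁ l₂ (1/2) (1/2) n - Cmin 1 1 n * Sfun τ l₁ l₂ (3/2) (3/2) n)
          + (Cmin 1 1 n * Sfun τ l₁ l₂ 1 (3/2) n - Cmin 1 1 n * Sfun τ l₁ l₂ 1 (1/2) n)
          + (Cmin 1 1 n * Sfun τ l₁ l₂ (3/2) 1 n - Cmin 1 1 n * Sfun τ l₁ l₂ (1/2) 1 n)) := by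
  unfold Gser
  apply tsum_congr
  intro n
  have key : ∀ r : ℚ,
      qpow τ (2 * Qform ((↑(n.1+1):ℚ) + l₁ - 1/2) ((↑(n.2+1):ℚ) + l₂ - 1/2)) * qpow τ r
        = qpow τ (2 * Qform ((↑(n.1+1):ℚ) + l₁ - 1/2) ((↑(n.2+1):ℚ) + l₂ - 1/2) + r) :=
    fun r => (qpow_add τ _ r).symm
  unfold Cmin Sfun
  rw [show (2 * Qform ((n.1:ℚ) + l₁ + 1/2) ((n.2:ℚ) + l₂ + 1/2) : ℚ)
      = 2 * Qform ((↑(n.1+1):ℚ) + l₁ - 1/2) ((↑(n.2+1):ℚ) + l₂ - 1/2) from by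
    push_cast; unfold Qform; ring]
  rw [show (2 * Qform ((n.1:ℚ) + l₁ + 3/2) ((n.2:ℚ) + l₂ + 3/2) : ℚ)
      = 2 * Qform ((↑(n.1+1):ℚ) + l₁ - 1/2) ((↑(n.2+1):ℚ) + l₂ - 1/2)
        + (2 * ((↑(n.1+1):ℚ) + l₁) + 2 * ((↑(n.2+1):ℚ) + l₂)) from by
    push_cast; unfold Qform; ring]
  rw [show (2 * Qform ((n.1:ℚ) + l₁ + 1) ((n.2:ℚ) + l₂ + 3/2) : ℚ)
      = 2 * Qform ((↑(n.1+1):ℚ) + l₁ - 1/2) ((↑(n.2+1):ℚ) + l₂ - 1/2)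
        + 3 * ((↑(n.2+1):ℚ) + l₂) from by
    push_cast; unfold Qform; ring]
  rw [show (2 * Qform ((n.1:ℚ) + l₁ + 1) ((n.2:ℚ) + l₂ + 1/2) : ℚ)
      = 2 * Qform ((↑(n.1+1):ℚ) + l₁ - 1/2) ((↑(n.2+1):ℚ) + l₂ - 1/2)
        + (2 * ((↑(n.1+1):ℚ) + l₁) - ((↑(n.2+1):ℚ) + l₂)) from by
    push_cast; unfold Qform; ring]
  rw [show (2 * Qform ((n.1:ℚ) + l₁ + 3/2) ((n.2:ℚ) + l₂ + 1) : ℚ)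
      = 2 * Qform ((↑(n.1+1):ℚ) + l₁ - 1/2) ((↑(n.2+1):ℚ) + l₂ - 1/2)
        + 3 * ((↑(n.1+1):ℚ) + l₁) from by
    push_cast; unfold Qform; ring]
  rw [show (2 * Qform ((n.1:ℚ) + l₁ + 1/2) ((n.2:ℚ) + l₂ + 1) : ℚ)
      = 2 * Qform ((↑(n.1+1):ℚ) + l₁ - 1/2) ((↑(n.2+1):ℚ) + l₂ - 1/2)
        + (2 * ((↑(n.2+1):ℚ) + l₂) - ((↑(n.1+1):ℚ) + l₁)) from by
    push_cast; unfold Qform; ring]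
  simp only [qpow_add]
  ring

/-- Lemma 3.3 of the paper: for p=2,
G_lam(q) = Σ_{n₁,n₂≥0} q^{2Q(n₁+l₁+1/2,n₂+l₂+1/2)}
 - Σ_{n₂>n₁≥0} q^{2Q(n₁+l₁+1/2,n₂+l₂)} - Σ_{n₁>n₂≥0} q^{2Q(n₁+l₁,n₂+l₂+1/2)}. -/
theorem stmt10 (τ : ℂ) (hτ : 0 < τ.im) (l₁ l₂ : ℚ) :
    Gser τ l₁ l₂
      = (∑' n : ℕ × ℕ, qpow τ (2 * Qform ((n.1 : ℚ) + l₁ + 1/2) ((n.2 : ℚ) + l₂ + 1/2)))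
        - (∑' n : ℕ × ℕ, if n.1 < n.2 then
            qpow τ (2 * Qform ((n.1 : ℚ) + l₁ + 1/2) ((n.2 : ℚ) + l₂)) else 0)
        - (∑' n : ℕ × ℕ, if n.2 < n.1 then
            qpow τ (2 * Qform ((n.1 : ℚ) + l₁) ((n.2 : ℚ) + l₂ + 1/2)) else 0) := by
  classical
  have sA : Summable (fun n : ℕ × ℕ =>
      Cmin 1 1 n * Sfun τ l₁ l₂ (1/2) (1/2) n - Cmin 1 1 n * Sfun τ l₁ l₂ (3/2) (3/2) n) :=
    (summable_CS τ hτ l₁ l₂ _ _ 1 1 le_rfl le_rfl).sub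
      (summable_CS τ hτ l₁ l₂ _ _ 1 1 le_rfl le_rfl)
  have sB : Summable (fun n : ℕ × ℕ =>
      Cmin 1 1 n * Sfun τ l₁ l₂ 1 (3/2) n - Cmin 1 1 n * Sfun τ l₁ l₂ 1 (1/2) n) :=
    (summable_CS τ hτ l₁ l₂ _ _ 1 1 le_rfl le_rfl).sub
      (summable_CS τ hτ l₁ l₂ _ _ 1 1 le_rfl le_rfl)
  have sC : Summable (fun n : ℕ × ℕ =>
      Cmin 1 1 n * Sfun τ l₁ l₂ (3/2) 1 n - Cmin 1 1 n * Sfun τ l₁ l₂ (1/2) 1 n) :=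
    (summable_CS τ hτ l₁ l₂ _ _ 1 1 le_rfl le_rfl).sub
      (summable_CS τ hτ l₁ l₂ _ _ 1 1 le_rfl le_rfl)
  rw [gser_expand τ l₁ l₂, Summable.tsum_add (sA.add sB) sC, Summable.tsum_add sA sB,
    groupA τ hτ l₁ l₂, groupB τ hτ l₁ l₂, groupC τ hτ l₁ l₂]
  have t1 : ∑' n : ℕ × ℕ, Sfun τ l₁ l₂ (1/2) (1/2) n
      = ∑' n : ℕ × ℕ, qpow τ (2 * Qform ((n.1 : ℚ) + l₁ + 1/2) ((n.2 : ℚ) + l₂ + 1/2)) :=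
    tsum_congr fun n => rfl
  have t2 : ∑' k : ℕ × ℕ, (if k.1 < k.2 then Sfun τ l₁ l₂ (1/2) 0 k else 0)
      = ∑' n : ℕ × ℕ, (if n.1 < n.2 then
          qpow τ (2 * Qform ((n.1 : ℚ) + l₁ + 1/2) ((n.2 : ℚ) + l₂)) else 0) := by
    apply tsum_congr
    intro n
    by_cases h : n.1 < n.2
    · rw [if_pos h, if_pos h]
      unfold Sfun
      rw [show (2 * Qform ((n.1:ℚ) + l₁ + 1/2) ((n.2:ℚ) + l₂ + 0) : ℚ)
          = 2 * Qform ((n.1:ℚ) + l₁ + 1/2) ((n.2:ℚ) + l₂) from by unfold Qform; ring]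
    · rw [if_neg h, if_neg h]
  have t3 : ∑' k : ℕ × ℕ, (if k.2 < k.1 then Sfun τ l₁ l₂ 0 (1/2) k else 0)
      = ∑' n : ℕ × ℕ, (if n.2 < n.1 then
          qpow τ (2 * Qform ((n.1 : ℚ) + l₁) ((n.2 : ℚ) + l₂ + 1/2)) else 0) := by
    apply tsum_congr
    intro n
    by_cases h : n.2 < n.1
    · rw [if_pos h, if_pos h]
      unfold Sfun
      rw [show (2 * Qform ((n.1:ℚ) + l₁ + 0) ((n.2:ℚ) + l₂ + 1/2) : ℚ)
          = 2 * Qform ((n.1:ℚ) + l₁) ((n.2:ℚ) + l₂ + 1/2) from by unfold Qform; ring]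
    · rw [if_neg h, if_neg h]
  rw [t1, t2, t3]
  ring
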